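/- Let T > 0, A ≥ 0, C ≥ 0, c > 0, δ > 0, and let M₀ > 0 satisfy A·h − c·h^(1+δ) + C ≤ 0 for all h ≥ M₀. Let g : (0,T] → ℝ be a differentiable nonnegative function with g(t) → 0 as t → 0⁺, satisfying g′(t) ≤ A·(g(t)/t) − c·(g(t)/t)^(1+δ) + C for all t ∈ (0,T]. Then g(t) ≤ M₀·t for all t ∈ (0,T]. -/

import Mathlib

/-! Wherever `g t ≥ M₀ t`, the differential inequality and the choice of `M₀` force `g' t ≤ 0`.
Hence `g` can never cross the line `t ↦ M₀ t + η` (`η > 0`) from below, since that line has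
slope `M₀ > 0`. As `g a < η` for small `a > 0`, this gives `g t ≤ M₀ t + η`, and `η → 0`. -/

open Set Filter Topology

theorem le_mul_add_of_deriv_nonpos_above {g g' : ℝ → ℝ} {a b M η : ℝ} (hM : 0 < M) (hη : 0 ≤ η)
    (hderiv : ∀ t ∈ Icc a b, HasDerivAt g (g' t) t)
    (hdecr : ∀ t ∈ Ico a b, M * t ≤ g t → g' t ≤ 0) (ha : g a ≤ M * a + η) :
    ∀ t ∈ Icc a b, g t ≤ M * t + η := by
  have hline : ∀ t, HasDerivAt (fun t => M * t + η) M t := fun t => by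
    simpa using ((hasDerivAt_id t).const_mul M).add_const η
  refine image_le_of_deriv_right_lt_deriv_boundary
    (fun t ht => (hderiv t ht).continuousAt.continuousWithinAt)
    (fun t ht => (hderiv t (Ico_subset_Icc_self ht)).hasDerivWithinAt) ha hline ?_
  intro t ht hcross
  exact (hdecr t ht (by linarith)).trans_lt hM

theorem le_mul_of_tendsto_zero_of_deriv_nonpos_above {g g' : ℝ → ℝ} {T M : ℝ} (hM : 0 < M)
    (hderiv : ∀ t ∈ Ioc 0 T, HasDerivAt g (g' t) t) (hlim : Tendsto g (𝓝[>] 0) (𝓝 0))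
    (hdecr : ∀ t ∈ Ioc 0 T, M * t ≤ g t → g' t ≤ 0) :
    ∀ t ∈ Ioc 0 T, g t ≤ M * t := by
  intro t ht
  refine le_of_forall_pos_le_add fun η hη => ?_
  obtain ⟨a, hga, hat⟩ : ∃ a, g a < η ∧ a ∈ Ioc 0 t :=
    ((hlim.eventually (gt_mem_nhds hη)).and (Ioc_mem_nhdsGT ht.1)).exists
  have hsub : Icc a t ⊆ Ioc 0 T := fun s hs => ⟨hat.1.trans_le hs.1, hs.2.trans ht.2⟩
  exact le_mul_add_of_deriv_nonpos_above hM hη.le (fun s hs => hderiv s (hsub hs))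
    (fun s hs => hdecr s (hsub (Ico_subset_Icc_self hs)))
    (hga.le.trans (le_add_of_nonneg_left (mul_pos hM hat.1).le)) t ⟨hat.2, le_rfl⟩

theorem smoothing_rate_general (T A C c δ M₀ : ℝ) (hM₀ : 0 < M₀)
    (habs : ∀ h : ℝ, M₀ ≤ h → A * h - c * h ^ (1 + δ) + C ≤ 0)
    (g g' : ℝ → ℝ)
    (hderiv : ∀ t ∈ Set.Ioc (0 : ℝ) T, HasDerivAt g (g' t) t)
    (hlim : Filter.Tendsto g (nhdsWithin 0 (Set.Ioi 0)) (nhds 0))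
    (hineq : ∀ t ∈ Set.Ioc (0 : ℝ) T,
      g' t ≤ A * (g t / t) - c * (g t / t) ^ (1 + δ) + C) :
    ∀ t ∈ Set.Ioc (0 : ℝ) T, g t ≤ M₀ * t := by
  refine le_mul_of_tendsto_zero_of_deriv_nonpos_above hM₀ hderiv hlim fun t ht hgt => ?_
  have hratio : M₀ ≤ g t / t := (le_div_iff₀ ht.1).2 hgt
  exact (hineq t ht).trans (habs _ hratio)

theorem smoothing_rate (T A C c δ M₀ : ℝ) (hT : 0 < T) (hA : 0 ≤ A) (hC : 0 ≤ C)
    (hc : 0 < c) (hδ : 0 < δ) (hM₀ : 0 < M₀)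
    (habs : ∀ h : ℝ, M₀ ≤ h → A * h - c * h ^ (1 + δ) + C ≤ 0)
    (g g' : ℝ → ℝ)
    (hderiv : ∀ t ∈ Set.Ioc (0 : ℝ) T, HasDerivAt g (g' t) t)
    (hnonneg : ∀ t ∈ Set.Ioc (0 : ℝ) T, 0 ≤ g t)
    (hlim : Filter.Tendsto g (nhdsWithin 0 (Set.Ioi 0)) (nhds 0))
    (hineq : ∀ t ∈ Set.Ioc (0 : ℝ) T,
      g' t ≤ A * (g t / t) - c * (g t / t) ^ (1 + δ) + C) :
    ∀ t ∈ Set.Ioc (0 : ℝ) T, g t ≤ M₀ * t :=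
  smoothing_rate_general T A C c δ M₀ hM₀ habs g g' hderiv hlim hineq
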